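/- In the setting of the previous statement (k = 2, T = 2π, ψ(t,(x₁,x₂)) = (−x₂, x₁), φ(t,(x₁,x₂)) = (0, f(t, −x₁, x₂)) with f continuous and 2π-periodic in t, ξ(a,θ) = (−a cos θ, a sin θ), R(θ) the rotation matrix with rows (cos θ, sin θ) and (−sin θ, cos θ), and H(a,θ) = ∫₀^{2π} ( sin τ · f(τ+θ, a cos τ, −a sin τ), cos τ · f(τ+θ, a cos τ, −a sin τ) ) dτ), let a₀, θ₀ ∈ ℝ, 0 < δ ≤ min(a₀, π), and V = (a₀−δ, a₀+δ) × (θ₀−δ, θ₀+δ). Assume H(a,θ) ≠ 0 for all (a,θ) on the boundary ∂V of V. Then for each s ∈ ℝ the map Γ : [0,1] × ∂V → ℝ², Γ(λ, (a,θ)) = R(λθ) H(a,θ), is a continuous homotopy satisfying Γ(λ, (a,θ)) ≠ 0 for all λ ∈ [0,1] and (a,θ) ∈ ∂V, with Γ(0, (a,θ)) = H(a,θ) and Γ(1, (a,θ)) = η(2π, s, ξ(a,θ)) − η(0, s, ξ(a,θ)); that is, the vector fields H(·,·) and η(2π, s, ξ(·,·)) − η(0, s, ξ(·,·)) are homotopic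 without zeros on ∂V. -/

import Mathlib

/-!
Let `J v = (-v₁, v₀)` and `y = η(·, s, ξ(a,θ))`. Since `Ω(t,0,·)` is the rotation `exp (tJ)` and
`R(t) = exp (-tJ)`, the function `R(t) y(t)` has derivative `R(t) (0, g(t))`, where `g(t)` is
the second component of `φ(t, Ω(t,0,ξ(a,θ)))`. Integrating over `[0, 2π]` gives
`η(2π) - η(0) = ∫₀^{2π} R(t) (0, g(t)) dt`. On the other hand the integrand of `R(θ) H(a,θ)` is
the `θ`-translate of this `2π`-periodic integrand, so `R(θ) H(a,θ)` is the same integral. Hence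
`Γ(1,·)` is the difference of the `η`, and `Γ` never vanishes on `∂V` because every `R(λθ)` is
invertible.
-/

open Set Metric

/-- The point of `ℝ²` with polar-type coordinates `ξ(a,θ) = (-a cos θ, a sin θ)`. -/
noncomputable def xiFun (a θ : ℝ) : EuclideanSpace ℝ (Fin 2) :=
  !₂[-(a * Real.cos θ), a * Real.sin θ]

/-- The matrix with rows `(cos θ, sin θ)` and `(-sin θ, cos θ)` acting on `ℝ²`. -/
noncomputable def rotMat (θ : ℝ) (v : EuclideanSpace ℝ (Fin 2)) : EuclideanSpace ℝ (Fin 2) :=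
  !₂[Real.cos θ * v 0 + Real.sin θ * v 1, -Real.sin θ * v 0 + Real.cos θ * v 1]

/-- `H(a,θ) = ∫₀^{2π} (sin τ · f(τ+θ, a cos τ, -a sin τ), cos τ · f(τ+θ, a cos τ, -a sin τ)) dτ`. -/
noncomputable def Hfun (f : ℝ → ℝ → ℝ → ℝ) (a θ : ℝ) : EuclideanSpace ℝ (Fin 2) :=
  ∫ τ in (0 : ℝ)..(2 * Real.pi),
    (!₂[Real.sin τ * f (τ + θ) (a * Real.cos τ) (-(a * Real.sin τ)),
       Real.cos τ * f (τ + θ) (a * Real.cos τ) (-(a * Real.sin τ))] :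
      EuclideanSpace ℝ (Fin 2))

local notation "ℝ²" => EuclideanSpace ℝ (Fin 2)

open Real

noncomputable def quarterTurn : ℝ² →L[ℝ] ℝ² :=
  LinearMap.toContinuousLinearMap
  { toFun := fun v => !₂[-(v 1), v 0]
    map_add' := fun v w => by ext i; fin_cases i <;> simp [add_comm]
    map_smul' := fun c v => by ext i; fin_cases i <;> simp }

lemma quarterTurn_apply (v : ℝ²) : quarterTurn v = !₂[-(v 1), v 0] := rfl

lemma quarterTurn_quarterTurn (v : ℝ²) : quarterTurn (quarterTurn v) = -v := by
  ext i; fin_cases i <;> simp [quarterTurn_apply]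

lemma rotMat_eq_smul_sub_smul (θ : ℝ) (v : ℝ²) :
    rotMat θ v = cos θ • v - sin θ • quarterTurn v := by
  ext i; fin_cases i <;> simp [rotMat, quarterTurn_apply, sub_eq_add_neg, add_comm]

noncomputable def rotCLM (θ : ℝ) : ℝ² →L[ℝ] ℝ² :=
  cos θ • ContinuousLinearMap.id ℝ ℝ² - sin θ • quarterTurn

lemma rotCLM_apply (θ : ℝ) (v : ℝ²) : rotCLM θ v = rotMat θ v :=
  (rotMat_eq_smul_sub_smul θ v).symm

lemma rotMat_rotMat (α β : ℝ) (v : ℝ²) : rotMat α (rotMat β v) = rotMat (α + β) v := by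
  ext i; fin_cases i <;> simp [rotMat, cos_add, sin_add] <;> ring

lemma rotMat_zero (v : ℝ²) : rotMat 0 v = v := by
  ext i; fin_cases i <;> simp [rotMat]

lemma rotMat_two_pi (v : ℝ²) : rotMat (2 * π) v = v := by
  ext i; fin_cases i <;> simp [rotMat]

lemma rotMat_injective (θ : ℝ) : Function.Injective (rotMat θ) :=
  Function.LeftInverse.injective (g := rotMat (-θ)) fun v => by
    rw [rotMat_rotMat, neg_add_cancel, rotMat_zero]

lemma rotMat_ne_zero {θ : ℝ} {v : ℝ²} (hv : v ≠ 0) : rotMat θ v ≠ 0 := fun h =>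
  hv (rotMat_injective θ (h.trans (by rw [← rotCLM_apply, map_zero])))

lemma rotMat_vertical (θ c : ℝ) : rotMat θ !₂[0, c] = !₂[sin θ * c, cos θ * c] := by
  ext i; fin_cases i <;> simp [rotMat]

@[fun_prop]
lemma Continuous.rotMat {X : Type*} [TopologicalSpace X] {g : X → ℝ} {v : X → ℝ²}
    (hg : Continuous g) (hv : Continuous v) : Continuous fun x => rotMat (g x) (v x) := by
  simp only [rotMat_eq_smul_sub_smul]; fun_prop

-- `R(t) = exp (-tJ)`, so `d/dt R(t) = -R(t) J` cancels the term `J y`.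
lemma hasDerivAt_rotMat_comp {y : ℝ → ℝ²} {b : ℝ²} {t : ℝ}
    (hy : HasDerivAt y (b + quarterTurn (y t)) t) :
    HasDerivAt (fun u => rotMat u (y u)) (rotMat t b) t := by
  have hfun : (fun u => rotMat u (y u)) = fun u => cos u • y u - sin u • quarterTurn (y u) :=
    funext fun u => rotMat_eq_smul_sub_smul u (y u)
  rw [hfun]
  refine (((hasDerivAt_cos t).smul hy).sub
    ((hasDerivAt_sin t).smul (quarterTurn.hasFDerivAt.comp_hasDerivAt t hy))).congr_deriv ?_
  rw [rotMat_eq_smul_sub_smul, map_add, quarterTurn_quarterTurn, Function.comp_apply]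
  module

lemma integral_rotMat_eq_sub {y b : ℝ → ℝ²} (hb : Continuous b)
    (hy : ∀ t, HasDerivAt y (b t + quarterTurn (y t)) t) (α β : ℝ) :
    ∫ t in α..β, rotMat t (b t) = rotMat β (y β) - rotMat α (y α) :=
  intervalIntegral.integral_eq_sub_of_hasDerivAt (fun t _ => hasDerivAt_rotMat_comp (hy t))
    ((by fun_prop : Continuous fun t => rotMat t (b t)).intervalIntegrable α β)

-- The second component of `φ(t, Ω(t,0,ξ(a,θ)))`, the orbit being `-a (cos (t-θ), sin (t-θ))`.
noncomputable def orbitForcing (f : ℝ → ℝ → ℝ → ℝ) (a θ t : ℝ) : ℝ :=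
  f t (a * cos (t - θ)) (-(a * sin (t - θ)))

lemma continuous_Hfun {f : ℝ → ℝ → ℝ → ℝ}
    (hf : Continuous fun p : ℝ × ℝ × ℝ => f p.1 p.2.1 p.2.2) :
    Continuous fun p : ℝ × ℝ => Hfun f p.1 p.2 := by
  apply intervalIntegral.continuous_parametric_intervalIntegral_of_continuous'
  have hfc : Continuous fun x : (ℝ × ℝ) × ℝ =>
      f (x.2 + x.1.2) (x.1.1 * cos x.2) (-(x.1.1 * sin x.2)) :=
    hf.comp (f := fun x : (ℝ × ℝ) × ℝ => (x.2 + x.1.2, x.1.1 * cos x.2, -(x.1.1 * sin x.2)))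
      (by fun_prop)
  fun_prop

lemma continuous_orbitForcing {f : ℝ → ℝ → ℝ → ℝ}
    (hf : Continuous fun p : ℝ × ℝ × ℝ => f p.1 p.2.1 p.2.2) (a θ : ℝ) :
    Continuous (orbitForcing f a θ) :=
  hf.comp (f := fun t => (t, a * cos (t - θ), -(a * sin (t - θ)))) (by fun_prop)

lemma rotMat_Hfun {f : ℝ → ℝ → ℝ → ℝ}
    (hf : Continuous fun p : ℝ × ℝ × ℝ => f p.1 p.2.1 p.2.2)
    (hfT : ∀ t u v, f (t + 2 * π) u v = f t u v) (a θ : ℝ) :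
    rotMat θ (Hfun f a θ) = ∫ t in 0..2 * π, rotMat t !₂[0, orbitForcing f a θ t] := by
  set G : ℝ → ℝ² := fun t => rotMat t !₂[0, orbitForcing f a θ t]
  have hGper : Function.Periodic G (2 * π) := fun t => by
    simp only [G, orbitForcing, show t + 2 * π - θ = t - θ + 2 * π by ring, rotMat_vertical,
      sin_add_two_pi, cos_add_two_pi, hfT]
  calc rotMat θ (Hfun f a θ) = ∫ τ in 0..2 * π, G (τ + θ) := by
        rw [Hfun, ← rotCLM_apply, ← (rotCLM θ).intervalIntegral_comp_comm]
        · congr 1 with τ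
          simp only [rotCLM_apply, G, orbitForcing, ← rotMat_vertical, rotMat_rotMat,
            add_sub_cancel_right, add_comm θ]
        · have := hf.comp (f := fun τ => (τ + θ, a * cos τ, -(a * sin τ))) (by fun_prop)
          exact Continuous.intervalIntegrable (by fun_prop) _ _
    _ = ∫ t in θ..θ + 2 * π, G t := by
        rw [intervalIntegral.integral_comp_add_right, zero_add, add_comm]
    _ = ∫ t in 0..2 * π, G t := by
        rw [hGper.intervalIntegral_add_eq θ 0, zero_add]

lemma hasDerivAt_eta_xiFun {f : ℝ → ℝ → ℝ → ℝ} {φ ψ : ℝ → ℝ² → ℝ²}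
    {Ω η : ℝ → ℝ → ℝ² → ℝ²}
    (hψdef : ∀ t v, ψ t v = ![-(v 1), v 0])
    (hφdef : ∀ t v, φ t v = ![0, f t (-(v 0)) (v 1)])
    (hΩrot : ∀ t ξ, Ω t 0 ξ =
      ![cos t * ξ 0 - sin t * ξ 1, sin t * ξ 0 + cos t * ξ 1])
    (hη : ∀ t s ξ, HasDerivAt (fun u => η u s ξ)
      (φ t (Ω t 0 ξ) + fderiv ℝ (fun x => ψ t x) (Ω t 0 ξ) (η t s ξ)) t)
    (s a θ t : ℝ) :
    HasDerivAt (fun u => η u s (xiFun a θ))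
      (!₂[0, orbitForcing f a θ t] + quarterTurn (η t s (xiFun a θ))) t := by
  have hψ : (fun x => ψ t x) = quarterTurn := by
    ext v i
    rw [hψdef]
    fin_cases i <;> rfl
  have hφ : φ t (Ω t 0 (xiFun a θ)) = !₂[0, orbitForcing f a θ t] := by
    ext i
    rw [hφdef, hΩrot]
    fin_cases i
    · simp
    · simp [xiFun, orbitForcing, cos_sub, sin_sub]
      congr 1 <;> ring
  simpa only [hψ, hφ, quarterTurn.fderiv] using hη t s (xiFun a θ)

theorem H_homotopic_eta_difference_general
    (f : ℝ → ℝ → ℝ → ℝ)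
    (hf : Continuous fun p : ℝ × ℝ × ℝ => f p.1 p.2.1 p.2.2)
    (hfT : ∀ t u v, f (t + 2 * Real.pi) u v = f t u v)
    (φ ψ : ℝ → EuclideanSpace ℝ (Fin 2) → EuclideanSpace ℝ (Fin 2))
    (hψdef : ∀ t v, ψ t v = ![-(v 1), v 0])
    (hφdef : ∀ t v, φ t v = ![0, f t (-(v 0)) (v 1)])
    -- `Ω (·) t₀ ξ` is the solution of `ẋ = ψ(t,x)`, `x(t₀) = ξ`; here the rotation by angle `t`
    (Ω : ℝ → ℝ → EuclideanSpace ℝ (Fin 2) → EuclideanSpace ℝ (Fin 2))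
    (hΩrot : ∀ t ξ, Ω t 0 ξ =
      ![Real.cos t * ξ 0 - Real.sin t * ξ 1, Real.sin t * ξ 0 + Real.cos t * ξ 1])
    -- `η (·) s ξ` is the solution of the linear system (2) with `y(s) = 0`
    (η : ℝ → ℝ → EuclideanSpace ℝ (Fin 2) → EuclideanSpace ℝ (Fin 2))
    (hη : ∀ t s ξ, HasDerivAt (fun u => η u s ξ)
      (φ t (Ω t 0 ξ) + fderiv ℝ (fun x => ψ t x) (Ω t 0 ξ) (η t s ξ)) t)
    -- the rectangle `V` and the nonvanishing of `H` on its boundary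
    (V : Set (ℝ × ℝ))
    (hHne : ∀ p ∈ frontier V, Hfun f p.1 p.2 ≠ 0) :
    ∀ s : ℝ, ∃ Γ : ℝ × (ℝ × ℝ) → EuclideanSpace ℝ (Fin 2),
      (∀ l p, Γ (l, p) = rotMat (l * p.2) (Hfun f p.1 p.2)) ∧
      ContinuousOn Γ (Icc (0 : ℝ) 1 ×ˢ frontier V) ∧
      (∀ l ∈ Icc (0 : ℝ) 1, ∀ p ∈ frontier V, Γ (l, p) ≠ 0) ∧
      (∀ p ∈ frontier V, Γ (0, p) = Hfun f p.1 p.2) ∧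
      (∀ p ∈ frontier V,
        Γ (1, p) = η (2 * Real.pi) s (xiFun p.1 p.2) - η 0 s (xiFun p.1 p.2)) := by
  intro s
  refine ⟨fun q => rotMat (q.1 * q.2.2) (Hfun f q.2.1 q.2.2), fun _ _ => rfl, ?_,
    fun _ _ p hp => rotMat_ne_zero (hHne p hp),
    fun _ _ => by dsimp only; rw [zero_mul, rotMat_zero], ?_⟩
  · have := continuous_Hfun hf
    exact Continuous.continuousOn (by fun_prop)
  · rintro ⟨a, θ⟩ -
    have := continuous_orbitForcing hf a θ
    dsimp only
    rw [one_mul, rotMat_Hfun hf hfT a θ,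
      integral_rotMat_eq_sub (by fun_prop) (hasDerivAt_eta_xiFun hψdef hφdef hΩrot hη s a θ),
      rotMat_two_pi, rotMat_zero]

/-- If `H` does not vanish on the boundary of `V = (a₀-δ, a₀+δ) × (θ₀-δ, θ₀+δ)`
(`0 < δ ≤ min a₀ π`), then for each `s` the vector fields `H(·,·)` and
`η(2π, s, ξ(·,·)) - η(0, s, ξ(·,·))` are homotopic without zeros on `∂V`, via the
homotopy `Γ(λ,(a,θ)) = R(λθ) H(a,θ)`. -/
theorem H_homotopic_eta_difference
    (f : ℝ → ℝ → ℝ → ℝ)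
    (hf : Continuous fun p : ℝ × ℝ × ℝ => f p.1 p.2.1 p.2.2)
    (hfT : ∀ t u v, f (t + 2 * Real.pi) u v = f t u v)
    (φ ψ : ℝ → EuclideanSpace ℝ (Fin 2) → EuclideanSpace ℝ (Fin 2))
    (hψdef : ∀ t v, ψ t v = ![-(v 1), v 0])
    (hφdef : ∀ t v, φ t v = ![0, f t (-(v 0)) (v 1)])
    -- `Ω (·) t₀ ξ` is the solution of `ẋ = ψ(t,x)`, `x(t₀) = ξ`; here the rotation by angle `t`
    (Ω : ℝ → ℝ → EuclideanSpace ℝ (Fin 2) → EuclideanSpace ℝ (Fin 2))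
    (hΩ0 : ∀ t₀ ξ, Ω t₀ t₀ ξ = ξ)
    (hΩ' : ∀ t t₀ ξ, HasDerivAt (fun s => Ω s t₀ ξ) (ψ t (Ω t t₀ ξ)) t)
    (hΩrot : ∀ t ξ, Ω t 0 ξ =
      ![Real.cos t * ξ 0 - Real.sin t * ξ 1, Real.sin t * ξ 0 + Real.cos t * ξ 1])
    -- `η (·) s ξ` is the solution of the linear system (2) with `y(s) = 0`
    (η : ℝ → ℝ → EuclideanSpace ℝ (Fin 2) → EuclideanSpace ℝ (Fin 2))
    (hη0 : ∀ s ξ, η s s ξ = 0)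
    (hη : ∀ t s ξ, HasDerivAt (fun u => η u s ξ)
      (φ t (Ω t 0 ξ) + fderiv ℝ (fun x => ψ t x) (Ω t 0 ξ) (η t s ξ)) t)
    -- the rectangle `V` and the nonvanishing of `H` on its boundary
    (a₀ θ₀ δ : ℝ) (hδ : 0 < δ) (hδa : δ ≤ a₀) (hδπ : δ ≤ Real.pi)
    (V : Set (ℝ × ℝ))
    (hV : V = Ioo (a₀ - δ) (a₀ + δ) ×ˢ Ioo (θ₀ - δ) (θ₀ + δ))
    (hHne : ∀ p ∈ frontier V, Hfun f p.1 p.2 ≠ 0) :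
    ∀ s : ℝ, ∃ Γ : ℝ × (ℝ × ℝ) → EuclideanSpace ℝ (Fin 2),
      (∀ l p, Γ (l, p) = rotMat (l * p.2) (Hfun f p.1 p.2)) ∧
      ContinuousOn Γ (Icc (0 : ℝ) 1 ×ˢ frontier V) ∧
      (∀ l ∈ Icc (0 : ℝ) 1, ∀ p ∈ frontier V, Γ (l, p) ≠ 0) ∧
      (∀ p ∈ frontier V, Γ (0, p) = Hfun f p.1 p.2) ∧
      (∀ p ∈ frontier V,
        Γ (1, p) = η (2 * Real.pi) s (xiFun p.1 p.2) - η 0 s (xiFun p.1 p.2)) :=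
  H_homotopic_eta_difference_general f hf hfT φ ψ hψdef hφdef Ω hΩrot η hη V hHne
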